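/- Let m items be partitioned into n nonempty groups, where group x has size w_x and m is the total number of items, and assign to each item an independent Uniform[0,1] random value; define the seed of each group as the minimum of its items' values. Let 0 < ε ≤ 1 and c > 0, and let k be an integer with k ≥ c/ε and k ≤ n. If group x satisfies w_x ≥ ε·m (i.e., x is a distinct heavy hitter with parameter ε), then the probability that the seed of group x is among the k smallest group seeds is at least 1 - exp(-c). -/

import Mathlib

/-!
Outside the null event of ties, if at least `k` groups have a seed below the seed of `x`, then
each of them has an item below that seed, so the `k` smallest item values all come from items
outside group `x`. Record the positions of the `k` smallest values, in increasing order, as an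
embedding `t : Fin k ↪ Fin m`. The corresponding cells are pairwise disjoint and, the values
being i.i.d., equiprobable, so each has probability at most `1 / m^(k)` (falling factorial).
Only `(m - w x)^(k)` of them avoid group `x`, and
`(m - w x)^(k) / m^(k) ≤ (1 - ε)^k ≤ exp (-ε k) ≤ exp (-c)`.
-/

open MeasureTheory ProbabilityTheory Set Finset

noncomputable def groupSeed {Ω : Type*} {m n : ℕ} (g : Fin m → Fin n)
    (U : Fin m → Ω → ℝ) (x : Fin n) (ω : Ω) : WithTop ℝ :=
  (Finset.univ.filter fun p => g p = x).inf fun p => ((U p ω : ℝ) : WithTop ℝ)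

open Function
open scoped ENNReal

def prefixCell {ι α : Type*} [Preorder α] {k : ℕ} (t : Fin k ↪ ι) : Set (ι → α) :=
  {u | StrictMono (fun i => u (t i)) ∧ ∀ i, ∀ p ∉ range t, u (t i) < u p}

section PrefixCell
variable {ι α : Type*} {k : ℕ}

lemma apply_eq_of_mem_prefixCell [LinearOrder α] {t t' : Fin k ↪ ι} {u : ι → α}
    (h : u ∈ prefixCell t) {i : Fin k} (hlt : ∀ j < i, t j = t' j)
    (hle : u (t' i) ≤ u (t i)) : t' i = t i := by
  by_cases hmem : t' i ∈ range t
  · obtain ⟨j, hj⟩ := hmem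
    rcases lt_trichotomy j i with hji | rfl | hij
    · exact absurd (t'.injective (by rw [← hlt j hji, hj])) hji.ne
    · exact hj.symm
    · exact absurd (hj ▸ h.1 hij) hle.not_gt
  · exact absurd (h.2 i _ hmem) hle.not_gt

lemma pairwise_disjoint_prefixCell [LinearOrder α] :
    Pairwise (Disjoint on fun t : Fin k ↪ ι => prefixCell (α := α) t) := by
  intro t t' hne
  refine Set.disjoint_left.2 fun u h h' => hne (Embedding.ext fun i => ?_)
  induction i using WellFoundedLT.induction with
  | _ i ih =>
    rcases le_total (u (t' i)) (u (t i)) with hle | hle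
    · exact (apply_eq_of_mem_prefixCell h ih hle).symm
    · exact apply_eq_of_mem_prefixCell h' (fun j hj => (ih j hj).symm) hle

lemma exists_mem_prefixCell [LinearOrder α] {m : ℕ} {u : Fin m → α} (hu : Injective u)
    (hk : k ≤ m) : ∃ t : Fin k ↪ Fin m, u ∈ prefixCell t := by
  set σ := Tuple.sort u
  have hσ : StrictMono (u ∘ σ) :=
    (Tuple.monotone_sort u).strictMono_of_injective (hu.comp σ.injective)
  refine ⟨(Fin.castLEEmb hk).trans σ.toEmbedding, hσ.comp (Fin.strictMono_castLE hk),
    fun i p hp => ?_⟩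
  have hkp : k ≤ (σ.symm p : ℕ) := by
    by_contra! hpk
    exact hp ⟨⟨σ.symm p, hpk⟩, by simp⟩
  have hlt : Fin.castLE hk i < σ.symm p := Fin.lt_def.2 (lt_of_lt_of_le i.2 hkp)
  simpa using hσ hlt

lemma apply_mem_of_mem_prefixCell [LinearOrder α] [Fintype ι] {t : Fin k ↪ ι} {u : ι → α}
    (hu : u ∈ prefixCell t) {L : Set α} [DecidablePred (· ∈ L)] (hL : IsLowerSet L)
    (hk : k ≤ #{p | u p ∈ L}) (i : Fin k) : u (t i) ∈ L := by
  by_contra hi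
  have hsub : ({p | u p ∈ L} : Finset ι) ⊆ (Finset.Iio i).map t := by
    intro p hp
    have hpi : u p < u (t i) :=
      lt_of_not_ge fun h => hi (hL h (Finset.mem_filter.1 hp).2)
    by_cases hpr : p ∈ range t
    · obtain ⟨j, rfl⟩ := hpr
      exact Finset.mem_map_of_mem _ (Finset.mem_Iio.2 (hu.1.lt_iff_lt.1 hpi))
    · exact absurd (hu.2 i p hpr) hpi.not_gt
  have := Finset.card_le_card hsub
  rw [card_map, Fin.card_Iio] at this
  omega

lemma comp_perm_mem_prefixCell_iff [Preorder α] (π : Equiv.Perm ι) (t : Fin k ↪ ι)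
    (u : ι → α) : u ∘ π ∈ prefixCell t ↔ u ∈ prefixCell (t.trans π.toEmbedding) := by
  simp only [prefixCell, mem_ofPred_eq, comp_apply, Embedding.trans_apply,
    Equiv.coe_toEmbedding]
  refine and_congr Iff.rfl (forall_congr' fun i => ?_)
  conv_rhs => rw [← π.forall_congr_right]
  simp

lemma exists_perm_trans_eq [Finite ι] (t t' : Fin k ↪ ι) :
    ∃ π : Equiv.Perm ι, t.trans π.toEmbedding = t' := by
  classical
  let e : {p // p ∈ range t} ≃ {p // p ∈ range t'} :=
    (Equiv.ofInjective t t.injective).symm.trans (Equiv.ofInjective t' t'.injective)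
  refine ⟨e.extendSubtype, Embedding.ext fun i => ?_⟩
  simp [e, Equiv.extendSubtype_apply_of_mem e (t i) ⟨i, rfl⟩]

end PrefixCell

section GroupSeed
variable {Ω : Type*} {m n k : ℕ} (g : Fin m → Fin n) (U : Fin m → Ω → ℝ) (ω : Ω)

lemma card_groupSeed_lt_le (a : WithTop ℝ) :
    #{y | groupSeed g U y ω < a} ≤ #{p | ((U p ω : ℝ) : WithTop ℝ) < a} := by
  refine (Finset.card_le_card fun y hy => ?_).trans (Finset.card_image_le (f := g))
  obtain ⟨p, hp, hpa⟩ := Finset.inf_lt_iff.1 (Finset.mem_filter.1 hy).2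
  exact Finset.mem_image.2 ⟨p, by simpa using hpa, (Finset.mem_filter.1 hp).2⟩

lemma exists_mem_prefixCell_of_le_card (x : Fin n) (hinj : Injective fun p => U p ω)
    (hk : k ≤ #{y | groupSeed g U y ω < groupSeed g U x ω}) :
    ∃ t : Fin k ↪ {p // g p ≠ x},
      (fun p => U p ω) ∈ prefixCell (t.trans (Embedding.subtype _)) := by
  set a := groupSeed g U x ω
  have hL : IsLowerSet {r : ℝ | (r : WithTop ℝ) < a} :=
    fun r s hsr hr => lt_of_le_of_lt (WithTop.coe_le_coe.2 hsr) hr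
  have hkL : k ≤ #{p | U p ω ∈ {r : ℝ | (r : WithTop ℝ) < a}} :=
    hk.trans (card_groupSeed_lt_le g U ω a)
  have hkm : k ≤ m := hkL.trans ((Finset.card_filter_le _ _).trans (by simp))
  obtain ⟨t, ht⟩ := exists_mem_prefixCell hinj hkm
  have hne : ∀ i, g (t i) ≠ x := fun i hgi =>
    (show ((U (t i) ω : ℝ) : WithTop ℝ) < a from
      apply_mem_of_mem_prefixCell ht hL hkL i).not_ge
        (Finset.inf_le (f := fun p => ((U p ω : ℝ) : WithTop ℝ)) (by simp [hgi]))
  exact ⟨⟨fun i => ⟨t i, hne i⟩, fun i j h => t.injective (congrArg Subtype.val h)⟩, ht⟩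

end GroupSeed

lemma ProbabilityTheory.IndepFun.measure_eq_eq_zero {Ω β : Type*} [MeasurableSpace Ω]
    [MeasurableSpace β] [MeasurableEq β] {μ : Measure Ω} [IsFiniteMeasure μ] {X Y : Ω → β}
    (hX : AEMeasurable X μ) (hY : AEMeasurable Y μ) (h : IndepFun X Y μ)
    [NullSingletonClass (μ.map Y)] : μ {ω | X ω = Y ω} = 0 := by
  have hslice : ∀ a, Prod.mk a ⁻¹' diagonal β = {a} := fun a => by ext; simp [eq_comm]
  calc μ {ω | X ω = Y ω} = μ.map (fun ω => (X ω, Y ω)) (diagonal β) :=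
        (Measure.map_apply_of_aemeasurable (hX.prodMk hY) measurableSet_diagonal).symm
    _ = 0 := by
        rw [(indepFun_iff_map_prod_eq_prod_map_map hX hY).1 h,
          Measure.prod_apply measurableSet_diagonal]
        simp [hslice]

lemma ae_injective_pi {ι β : Type*} [Fintype ι] [MeasurableSpace β] [MeasurableEq β]
    (ν : Measure β) [IsProbabilityMeasure ν] [NullSingletonClass ν] :
    ∀ᵐ u ∂Measure.pi (fun _ : ι => ν), Injective u := by
  have hindep : iIndepFun (fun i (u : ι → β) => u i) (Measure.pi fun _ => ν) :=
    iIndepFun_pi (X := fun _ => id) fun _ => aemeasurable_id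
  refine ae_all_iff.2 fun p => ae_all_iff.2 fun q => ?_
  by_cases hpq : p = q
  · exact .of_forall fun _ _ => hpq
  have : NullSingletonClass ((Measure.pi fun _ => ν).map fun u : ι → β => u q) := by
    rw [(measurePreserving_eval (fun _ => ν) q).map_eq]; infer_instance
  have hnull := (hindep.indepFun hpq).measure_eq_eq_zero
    (measurable_pi_apply p).aemeasurable (measurable_pi_apply q).aemeasurable
  exact (measure_eq_zero_iff_ae_notMem.1 hnull).mono fun u hu h => absurd h hu

section ProductMeasure
variable {ι : Type*} [Fintype ι] {k : ℕ}

lemma measurableSet_prefixCell (t : Fin k ↪ ι) : MeasurableSet (prefixCell (α := ℝ) t) := by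
  simp only [prefixCell, StrictMono, ofPred_and, ofPred_forall]
  refine .inter (.iInter fun i => .iInter fun j => .iInter fun _ => ?_)
    (.iInter fun i => .iInter fun p => .iInter fun _ => ?_) <;>
  exact measurableSet_lt (measurable_pi_apply _) (measurable_pi_apply _)

lemma measurePreserving_comp_perm {β : Type*} [MeasurableSpace β] (ν : Measure β)
    [SigmaFinite ν] (π : Equiv.Perm ι) :
    MeasurePreserving (fun u : ι → β => u ∘ π) (Measure.pi fun _ => ν)
      (Measure.pi fun _ => ν) :=
  measurePreserving_arrowCongr' (fun _ => ν) (fun _ => ν) π.symm (MeasurableEquiv.refl β)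
    fun _ => MeasurePreserving.id ν

variable (ν : Measure ℝ) [IsProbabilityMeasure ν]

lemma measure_prefixCell_eq (t t' : Fin k ↪ ι) :
    Measure.pi (fun _ => ν) (prefixCell t) = Measure.pi (fun _ => ν) (prefixCell t') := by
  obtain ⟨π, rfl⟩ := exists_perm_trans_eq t t'
  have hpre :
      prefixCell (t.trans π.toEmbedding) = (· ∘ π) ⁻¹' prefixCell (α := ℝ) t := by
    ext u; exact (comp_perm_mem_prefixCell_iff π t u).symm
  rw [hpre, (measurePreserving_comp_perm ν π).measure_preimage
    (measurableSet_prefixCell t).nullMeasurableSet]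

lemma measure_prefixCell_le (t : Fin k ↪ ι) :
    Measure.pi (fun _ => ν) (prefixCell t) ≤
      (Fintype.card (Fin k ↪ ι) : ℝ≥0∞)⁻¹ := by
  rw [ENNReal.le_inv_iff_mul_le]
  calc Measure.pi (fun _ => ν) (prefixCell t) * Fintype.card (Fin k ↪ ι)
      = ∑ t' : Fin k ↪ ι, Measure.pi (fun _ => ν) (prefixCell t') := by
        rw [Finset.sum_congr rfl fun t' _ => measure_prefixCell_eq ν t' t, Finset.sum_const,
          Finset.card_univ, nsmul_eq_mul, mul_comm]
    _ = Measure.pi (fun _ => ν) (⋃ t', prefixCell t') := by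
        rw [measure_iUnion pairwise_disjoint_prefixCell
          (measurableSet_prefixCell (ι := ι) (k := k)), tsum_fintype]
    _ ≤ 1 := prob_le_one

lemma measure_iUnion_prefixCell_subtype_le (q : ι → Prop) [DecidablePred q] :
    Measure.pi (fun _ => ν)
        (⋃ t : Fin k ↪ {p // q p}, prefixCell (t.trans (Embedding.subtype q)))
      ≤ (Fintype.card {p // q p}).descFactorial k *
          ((Fintype.card ι).descFactorial k : ℝ≥0∞)⁻¹ := by
  calc _ ≤ ∑ t : Fin k ↪ {p // q p},
        Measure.pi (fun _ => ν) (prefixCell (t.trans (Embedding.subtype q))) :=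
        measure_iUnion_fintype_le _ _
    _ ≤ ∑ _t : Fin k ↪ {p // q p}, (Fintype.card (Fin k ↪ ι) : ℝ≥0∞)⁻¹ :=
        Finset.sum_le_sum fun t _ => measure_prefixCell_le ν _
    _ = _ := by simp [Fintype.card_embedding_eq]

end ProductMeasure

lemma Nat.descFactorial_mul_pow_le {b m : ℕ} (h : b ≤ m) (k : ℕ) :
    b.descFactorial k * m ^ k ≤ m.descFactorial k * b ^ k := by
  induction k with
  | zero => simp
  | succ k ih =>
    rw [Nat.descFactorial_succ, Nat.descFactorial_succ, pow_succ, pow_succ]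
    have h1 : (b - k) * m ≤ (m - k) * b := by
      rw [Nat.sub_mul, Nat.sub_mul, mul_comm b m]
      exact Nat.sub_le_sub_left (Nat.mul_le_mul_left k h) (m * b)
    calc (b - k) * b.descFactorial k * (m ^ k * m)
        = ((b - k) * m) * (b.descFactorial k * m ^ k) := by ring
      _ ≤ ((m - k) * b) * (m.descFactorial k * b ^ k) := Nat.mul_le_mul h1 ih
      _ = (m - k) * m.descFactorial k * (b ^ k * b) := by ring

lemma descFactorial_mul_inv_descFactorial_le {b m k : ℕ} {ε c : ℝ} (hbm : b ≤ m)
    (hb : (b : ℝ) ≤ (1 - ε) * m) (hc : c ≤ ε * k) :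
    (b.descFactorial k : ℝ≥0∞) * (m.descFactorial k : ℝ≥0∞)⁻¹
      ≤ ENNReal.ofReal (Real.exp (-c)) := by
  have hreal : (b.descFactorial k : ℝ) ≤ Real.exp (-c) * m.descFactorial k := by
    rcases (m ^ k).eq_zero_or_pos with hmk | hmk
    · obtain ⟨rfl, hk⟩ := Nat.pow_eq_zero.1 hmk
      rw [Nat.descFactorial_eq_zero_iff_lt.2 (by omega), Nat.cast_zero]
      positivity
    have hpow : (b : ℝ) ^ k ≤ Real.exp (-c) * (m : ℝ) ^ k :=
      calc (b : ℝ) ^ k ≤ (Real.exp (-ε) * m) ^ k := by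
            refine pow_le_pow_left₀ (by positivity) (hb.trans ?_) k
            gcongr
            linarith [Real.add_one_le_exp (-ε)]
        _ = Real.exp (-(ε * k)) * (m : ℝ) ^ k := by
            rw [mul_pow, ← Real.exp_nat_mul]; ring_nf
        _ ≤ Real.exp (-c) * (m : ℝ) ^ k := by gcongr
    refine le_of_mul_le_mul_right ?_ (show (0 : ℝ) < (m : ℝ) ^ k by exact_mod_cast hmk)
    calc (b.descFactorial k : ℝ) * (m : ℝ) ^ k ≤ m.descFactorial k * (b : ℝ) ^ k := by
          exact_mod_cast Nat.descFactorial_mul_pow_le hbm k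
      _ ≤ m.descFactorial k * (Real.exp (-c) * (m : ℝ) ^ k) := by gcongr
      _ = Real.exp (-c) * m.descFactorial k * (m : ℝ) ^ k := by ring
  rw [← div_eq_mul_inv]
  refine ENNReal.div_le_of_le_mul ?_
  rw [← ENNReal.ofReal_natCast, ← ENNReal.ofReal_natCast (m.descFactorial k),
    ← ENNReal.ofReal_mul (Real.exp_nonneg _)]
  exact ENNReal.ofReal_le_ofReal hreal

lemma ofReal_one_sub_le_measure {Ω : Type*} [MeasurableSpace Ω] {μ : Measure Ω}
    [IsProbabilityMeasure μ] {s : Set Ω} {a : ℝ} (ha : 0 ≤ a)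
    (h : μ sᶜ ≤ ENNReal.ofReal a) :
    ENNReal.ofReal (1 - a) ≤ μ s := by
  rw [ENNReal.ofReal_sub _ ha, ENNReal.ofReal_one, tsub_le_iff_right]
  calc 1 = μ univ := measure_univ.symm
    _ ≤ μ s + μ sᶜ := measure_univ_le_add_compl s
    _ ≤ μ s + ENNReal.ofReal a := add_le_add_right h _

open scoped Classical in
theorem stmt_4_general {Ω : Type*} [MeasurableSpace Ω] (μ : Measure Ω) [IsProbabilityMeasure μ]
    (m n : ℕ) (g : Fin m → Fin n)
    (w : Fin n → ℕ) (hw : ∀ x, w x = (Finset.univ.filter fun p => g p = x).card)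
    (U : Fin m → Ω → ℝ)
    (hunif : ∀ p, Measure.map (U p) μ = (volume : Measure ℝ).restrict (Icc 0 1))
    (hindep : iIndepFun U μ)
    (ε c : ℝ) (hε0 : 0 < ε)
    (k : ℕ) (hk : c / ε ≤ (k : ℝ))
    (x : Fin n) (hx : ε * (m : ℝ) ≤ (w x : ℝ)) :
    ENNReal.ofReal (1 - Real.exp (-c)) ≤
      μ {ω | (Finset.univ.filter fun y : Fin n =>
          groupSeed g U y ω < groupSeed g U x ω).card < k} := by
  set ν := (volume : Measure ℝ).restrict (Icc 0 1)
  have : IsProbabilityMeasure ν := ⟨by simp [ν]⟩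
  have hU : ∀ p, AEMeasurable (U p) μ := fun p =>
    .of_map_ne_zero (by rw [hunif]; exact IsProbabilityMeasure.ne_zero ν)
  set J : Ω → Fin m → ℝ := fun ω p => U p ω
  have hJ : AEMeasurable J μ := aemeasurable_pi_lambda _ hU
  have hlaw : μ.map J = Measure.pi fun _ => ν := by
    rw [hindep.map_fun_eq_pi_map hU]; simp_rw [hunif]
  have hwm : w x ≤ m := by
    simpa [hw] using Finset.card_filter_le Finset.univ (fun p => g p = x)
  have hcard : Fintype.card {p // g p ≠ x} = m - w x := by
    rw [Fintype.card_subtype_compl, Fintype.card_fin, Fintype.card_subtype, hw]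
  set B : Set (Fin m → ℝ) :=
    ⋃ t : Fin k ↪ {p // g p ≠ x}, prefixCell (t.trans (Embedding.subtype _))
  refine ofReal_one_sub_le_measure (Real.exp_nonneg _) ?_
  calc μ _ ≤ μ (J ⁻¹' B) := by
        refine measure_mono_ae ((ae_of_ae_map hJ (hlaw ▸ ae_injective_pi ν)).mono
          fun ω hinj hmiss => mem_iUnion.2 ?_)
        exact exists_mem_prefixCell_of_le_card g U ω x hinj (not_lt.1 hmiss)
    _ = Measure.pi (fun _ => ν) B := by
        rw [← hlaw, Measure.map_apply_of_aemeasurable hJ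
          (.iUnion fun _ => measurableSet_prefixCell _)]
    _ ≤ (m - w x).descFactorial k * (m.descFactorial k : ℝ≥0∞)⁻¹ := by
        simpa [hcard] using measure_iUnion_prefixCell_subtype_le ν fun p => g p ≠ x
    _ ≤ ENNReal.ofReal (Real.exp (-c)) := by
        refine descFactorial_mul_inv_descFactorial_le (ε := ε) (Nat.sub_le m (w x)) ?_
          (by linarith [(div_le_iff₀ hε0).1 hk])
        rw [Nat.cast_sub hwm]
        linarith

open scoped Classical in
/-- **a sample of size `c/ε` catches every `ε`-distinct heavy hitter
with probability at least `1 - exp (-c)`.**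
`m` items are partitioned into `n` nonempty groups by `g` (surjectivity), group `x`
having size `w x`; each item gets an independent Uniform[0,1] value and the seed of
a group is the minimum value over its items.  If `0 < ε ≤ 1`, `c > 0`,
`c/ε ≤ k ≤ n`, and group `x` satisfies `w x ≥ ε·m`, then the probability that the
seed of `x` is among the `k` smallest group seeds is at least `1 - exp (-c)`. -/
theorem stmt_4 {Ω : Type*} [MeasurableSpace Ω] (μ : Measure Ω) [IsProbabilityMeasure μ]
    (m n : ℕ) (g : Fin m → Fin n) (hg : Function.Surjective g)
    (w : Fin n → ℕ) (hw : ∀ x, w x = (Finset.univ.filter fun p => g p = x).card)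
    (U : Fin m → Ω → ℝ) (hmeas : ∀ p, Measurable (U p))
    (hunif : ∀ p, Measure.map (U p) μ = (volume : Measure ℝ).restrict (Icc 0 1))
    (hindep : iIndepFun U μ)
    (ε c : ℝ) (hε0 : 0 < ε) (hε1 : ε ≤ 1) (hc : 0 < c)
    (k : ℕ) (hk : c / ε ≤ (k : ℝ)) (hkn : k ≤ n)
    (x : Fin n) (hx : ε * (m : ℝ) ≤ (w x : ℝ)) :
    ENNReal.ofReal (1 - Real.exp (-c)) ≤
      μ {ω | (Finset.univ.filter fun y : Fin n =>
          groupSeed g U y ω < groupSeed g U x ω).card < k} :=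
  stmt_4_general μ m n g w hw U hunif hindep ε c hε0 k hk x hx
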